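/- arXiv:2202.01773 — 4 statements merged into one kernel-verified Lean document; each statement's English description precedes it below -/
import Mathlib

section
/- Let Y ⊂ ℝ^{T−1} be a simplex code for T ≥ 2 classes and let β(p) = Σ_{y∈Y} p_y y. Then for every p ∈ Δ and every y* ∈ Y, y* maximizes y ↦ p_y over Y if and only if y* maximizes y ↦ ⟨β(p), y⟩ over Y; moreover the maximizer of one is unique if and only if the maximizer of the other is unique. In particular, decoding the regression function recovers the Bayes rule: the plug-in classifier Dβ(p) = argmax_{y∈Y} ⟨β(p), y⟩ coincides with argmax_{y∈Y} p_y whenever the latter is unique. -/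
open RealInnerProductSpace

/-- For a simplex code `y` for `T ≥ 2` classes, `p` in the probability
simplex and `β(p) = ∑_k p_k • y_k`:
* `y_i` maximizes `p` over the classes iff it maximizes `j ↦ ⟪β(p), y_j⟫`;
* the maximizer of one is unique iff the maximizer of the other is unique;
* in particular, if `i` is the unique maximizer of `p` (the Bayes class), then decoding
  `β(p)` recovers it: `⟪β(p), y_j⟫ < ⟪β(p), y_i⟫` for every `j ≠ i`. -/
theorem simplex_code_decoding_regression
    (T : ℕ) (hT : 2 ≤ T) (y : Fin T → EuclideanSpace ℝ (Fin (T - 1)))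
    (hnorm : ∀ i, ‖y i‖ = 1)
    (hinner : ∀ i j, i ≠ j → ⟪y i, y j⟫ = -1 / ((T : ℝ) - 1))
    (p : Fin T → ℝ) (hp : p ∈ stdSimplex ℝ (Fin T)) :
    (∀ i : Fin T,
      ((∀ j, p j ≤ p i) ↔ (∀ j, ⟪∑ k, p k • y k, y j⟫ ≤ ⟪∑ k, p k • y k, y i⟫))) ∧
    ((∃! i : Fin T, ∀ j, p j ≤ p i) ↔
      (∃! i : Fin T, ∀ j, ⟪∑ k, p k • y k, y j⟫ ≤ ⟪∑ k, p k • y k, y i⟫)) ∧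
    (∀ i : Fin T, (∀ j, j ≠ i → p j < p i) →
      ∀ j, j ≠ i → ⟪∑ k, p k • y k, y j⟫ < ⟪∑ k, p k • y k, y i⟫) := by
  have hT1 : (1 : ℝ) ≤ (T : ℝ) - 1 := by
    have : (2 : ℝ) ≤ (T : ℝ) := by exact_mod_cast hT
    linarith
  have hTpos : (0 : ℝ) < (T : ℝ) - 1 := by linarith
  have hc : (0 : ℝ) < (T : ℝ) / ((T : ℝ) - 1) := by positivity
  have key : ∀ j, ⟪∑ k, p k • y k, y j⟫ =
      ((T : ℝ) / ((T : ℝ) - 1)) * p j - 1 / ((T : ℝ) - 1) := by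
    intro j
    rw [sum_inner]
    have h1 : ∀ k, ⟪p k • y k, y j⟫ = p k * ⟪y k, y j⟫ := fun k =>
      real_inner_smul_left _ _ _
    calc (∑ k, ⟪p k • y k, y j⟫)
        = ∑ k, (p k * (-1 / ((T : ℝ) - 1)) +
            if k = j then p k * (1 + 1 / ((T : ℝ) - 1)) else 0) := by
          refine Finset.sum_congr rfl fun k _ => ?_
          rw [h1]
          by_cases hkj : k = j
          · subst hkj
            have : ⟪y k, y k⟫ = (1 : ℝ) := by
              rw [real_inner_self_eq_norm_sq, hnorm]; norm_num
            rw [this]; simp; ring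
          · rw [hinner k j hkj]; simp [hkj]
      _ = (∑ k, p k) * (-1 / ((T : ℝ) - 1)) + p j * (1 + 1 / ((T : ℝ) - 1)) := by
          rw [Finset.sum_add_distrib, Finset.sum_ite_eq' Finset.univ j,
            ← Finset.sum_mul]
          simp
      _ = ((T : ℝ) / ((T : ℝ) - 1)) * p j - 1 / ((T : ℝ) - 1) := by
          rw [hp.2]
          field_simp
          ring
  have hiff : ∀ i j : Fin T,
      (p j ≤ p i ↔ ⟪∑ k, p k • y k, y j⟫ ≤ ⟪∑ k, p k • y k, y i⟫) := by
    intro i j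
    rw [key, key]
    constructor
    · intro h
      have := mul_le_mul_of_nonneg_left h hc.le
      linarith
    · intro h
      nlinarith
  refine ⟨fun i => forall_congr' fun j => hiff i j, ?_, ?_⟩
  · constructor
    · rintro ⟨i, hi, hu⟩
      exact ⟨i, fun j => (hiff i j).1 (hi j),
        fun j hj => hu j fun k => (hiff j k).2 (hj k)⟩
    · rintro ⟨i, hi, hu⟩
      exact ⟨i, fun j => (hiff i j).2 (hi j),
        fun j hj => hu j fun k => (hiff j k).1 (hj k)⟩
  · intro i hi j hj
    rw [key, key]
    have := hi j hj
    nlinarith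
end

section
/- Let Y ⊂ ℝ^{T−1} be a simplex code for T ≥ 2 classes, let (𝒳, π) be a probability space, let ρ : 𝒳 → Δ be measurable, and set η = β ∘ ρ (the regression function) and c_*(x) = a maximizer of y ↦ ρ(x)_y (the Bayes rule, assumed measurable). Then for any δ > 0 the following are equivalent: (a) for π-almost every x, ρ(x)_{c_*(x)} − ρ(x)_y ≥ δ for all y ≠ c_*(x); (b) for π-almost every x, c_*(x) is the unique maximizer of y ↦ ⟨η(x), y⟩ over Y and min_{y ≠ c_*(x)} ⟨η(x), c_*(x) − y⟩ ≥ (T/(T−1)) δ. In particular, under either condition Dη = c_* almost surely and the decision margin satisfies M(η(x)) ≥ (T/(T−1)) δ for π-almost every x. -/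
open RealInnerProductSpace MeasureTheory

/-- Let `y` be a simplex code for `T ≥ 2` classes, `π` a probability
measure on `𝒳`, `ρ : 𝒳 → Δ` a measurable conditional class-probability map,
`η = β ∘ ρ` the regression function (here written `∑ k, ρ x k • y k`) and `c` the Bayes
rule (a.e. a maximizer of `ρ(x)`).  Then for `δ > 0` the following are equivalent:
(a) a.e. `ρ x (c x) - ρ x j ≥ δ` for every `j ≠ c x`;
(b) a.e. `c x` is the unique maximizer of `j ↦ ⟪η x, y j⟫` and
    `⟪η x, y (c x) - y j⟫ ≥ (T/(T-1)) δ` for every `j ≠ c x`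
(in particular, under either condition `Dη = c` a.s. and the decision margin satisfies
`M(η x) ≥ (T/(T-1)) δ` a.e.). -/
theorem hard_margin_transfer_regression
    {𝒳 : Type*} [MeasurableSpace 𝒳] (π : Measure 𝒳) [IsProbabilityMeasure π]
    (T : ℕ) (hT : 2 ≤ T) (y : Fin T → EuclideanSpace ℝ (Fin (T - 1)))
    (hnorm : ∀ i, ‖y i‖ = 1)
    (hinner : ∀ i j, i ≠ j → ⟪y i, y j⟫ = -1 / ((T : ℝ) - 1))
    (ρ : 𝒳 → Fin T → ℝ) (hρmeas : Measurable ρ)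
    (hρ : ∀ x, ρ x ∈ stdSimplex ℝ (Fin T))
    (c : 𝒳 → Fin T) (hc : Measurable c)
    (hcmax : ∀ᵐ x ∂π, ∀ j, ρ x j ≤ ρ x (c x))
    (δ : ℝ) (hδ : 0 < δ) :
    (∀ᵐ x ∂π, ∀ j, j ≠ c x → δ ≤ ρ x (c x) - ρ x j) ↔
    (∀ᵐ x ∂π,
      (∀ j, j ≠ c x → ⟪∑ k, ρ x k • y k, y j⟫ < ⟪∑ k, ρ x k • y k, y (c x)⟫) ∧
      (∀ j, j ≠ c x →
        (T / ((T : ℝ) - 1)) * δ ≤ ⟪∑ k, ρ x k • y k, y (c x) - y j⟫)) := by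
  have hT1 : (0 : ℝ) < (T : ℝ) - 1 := by
    have : (2 : ℝ) ≤ (T : ℝ) := by exact_mod_cast hT
    linarith
  have hTpos : (0 : ℝ) < (T : ℝ) := by linarith
  have key : ∀ x (i : Fin T),
      ⟪∑ k, ρ x k • y k, y i⟫ = ((T : ℝ) * ρ x i - 1) / ((T : ℝ) - 1) := by
    intro x i
    rw [sum_inner]
    have hsum : ∑ k, ρ x k = 1 := (hρ x).2
    have : ∀ k, ⟪ρ x k • y k, y i⟫ = ρ x k * ⟪y k, y i⟫ := fun k =>
      real_inner_smul_left _ _ _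
    simp_rw [this]
    rw [← Finset.add_sum_erase _ _ (Finset.mem_univ i)]
    have hii : ⟪y i, y i⟫ = 1 := by
      have := hnorm i
      rw [real_inner_self_eq_norm_sq, this]; norm_num
    have hrest : ∑ k ∈ Finset.univ.erase i, ρ x k * ⟪y k, y i⟫
        = (1 - ρ x i) * (-1 / ((T : ℝ) - 1)) := by
      have hcongr : ∀ k ∈ Finset.univ.erase i,
          ρ x k * ⟪y k, y i⟫ = ρ x k * (-1 / ((T : ℝ) - 1)) := fun k hk => by
        rw [hinner k i (Finset.ne_of_mem_erase hk)]
      rw [Finset.sum_congr rfl hcongr, ← Finset.sum_mul]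
      congr 1
      have := Finset.add_sum_erase _ (ρ x) (Finset.mem_univ i)
      rw [hsum] at this
      linarith
    rw [hii, hrest]
    field_simp
    ring
  have keydiff : ∀ x (i j : Fin T),
      ⟪∑ k, ρ x k • y k, y i - y j⟫
        = ((T : ℝ) / ((T : ℝ) - 1)) * (ρ x i - ρ x j) := by
    intro x i j
    rw [inner_sub_right, key, key]
    field_simp
    ring
  constructor
  · intro h
    filter_upwards [h] with x hx
    constructor
    · intro j hj
      have h1 := keydiff x (c x) j
      have h2 := hx j hj
      have hpos : (0 : ℝ) < ((T : ℝ) / ((T : ℝ) - 1)) * (ρ x (c x) - ρ x j) := by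
        apply mul_pos (div_pos hTpos hT1); linarith
      rw [inner_sub_right] at h1
      linarith
    · intro j hj
      rw [keydiff x (c x) j]
      have := hx j hj
      have hfrac : (0 : ℝ) < (T : ℝ) / ((T : ℝ) - 1) := div_pos hTpos hT1
      nlinarith
  · intro h
    filter_upwards [h] with x hx
    intro j hj
    have h2 := hx.2 j hj
    rw [keydiff x (c x) j] at h2
    have hfrac : (0 : ℝ) < (T : ℝ) / ((T : ℝ) - 1) := div_pos hTpos hT1
    exact le_of_mul_le_mul_left h2 hfrac
end

section
/- Let Y ⊂ ℝ^{T−1} be a simplex code for T ≥ 2 classes, let π be a probability measure on a measurable space 𝒳, and let f, f' : 𝒳 → ℝ^{T−1} be measurable and essentially bounded, where f(x) has a unique decoding maximizer for π-a.e. x. Then the Hamming distance of the plug-in classifiers satisfies r(Df', Df) ≤ π{x : ‖f' − f‖_∞ ≥ √((T−1)/(2T)) M(f(x))}, where ‖f' − f‖_∞ denotes the π-essential supremum of x ↦ ‖f'(x) − f(x)‖ and r(Df', Df) = π{x : Df'(x) ≠ Df(x)}. -/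
open RealInnerProductSpace MeasureTheory

/-- Let `y` be a simplex code for `T ≥ 2` classes, `π` a probability
measure on `𝒳`, `D` a decoder (a measurable maximizer-selection for `w ↦ ⟪w, y j⟫`),
and `f, f' : 𝒳 → ℝ^{T-1}` measurable, essentially bounded, where `f x` has a unique
decoding maximizer for a.e. `x`.  Then the Hamming distance of the plug-in classifiers
satisfies `r(Df', Df) ≤ π{x : ‖f' - f‖_∞ ≥ √((T-1)/(2T)) · M(f x)}`, where
`M(w) = min_{j ≠ D w} ⟪w, y (D w) - y j⟫` and `‖·‖_∞` is the `π`-essential sup. -/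
theorem hamming_plugin_bound
    {𝒳 : Type*} [MeasurableSpace 𝒳] (π : Measure 𝒳) [IsProbabilityMeasure π]
    (T : ℕ) (hT : 2 ≤ T) (y : Fin T → EuclideanSpace ℝ (Fin (T - 1)))
    (hnorm : ∀ i, ‖y i‖ = 1)
    (hinner : ∀ i j, i ≠ j → ⟪y i, y j⟫ = -1 / ((T : ℝ) - 1))
    (D : EuclideanSpace ℝ (Fin (T - 1)) → Fin T)
    (hD : ∀ w j, ⟪w, y j⟫ ≤ ⟪w, y (D w)⟫) (hDmeas : Measurable D)
    (f f' : 𝒳 → EuclideanSpace ℝ (Fin (T - 1)))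
    (hf : Measurable f) (hf' : Measurable f')
    (hfbd : ∃ B : ℝ, ∀ᵐ x ∂π, ‖f x‖ ≤ B)
    (hf'bd : ∃ B : ℝ, ∀ᵐ x ∂π, ‖f' x‖ ≤ B)
    (huniq : ∀ᵐ x ∂π, ∀ j, j ≠ D (f x) → ⟪f x, y j⟫ < ⟪f x, y (D (f x))⟫) :
    π {x | D (f' x) ≠ D (f x)} ≤
      π {x | Real.sqrt (((T : ℝ) - 1) / (2 * T)) *
          (⨅ j : {j : Fin T // j ≠ D (f x)}, ⟪f x, y (D (f x)) - y (j : Fin T)⟫) ≤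
          essSup (fun x' => ‖f' x' - f x'‖) π} := by
  have hT1 : (1 : ℝ) ≤ (T : ℝ) - 1 := by
    have : (2 : ℝ) ≤ (T : ℝ) := by exact_mod_cast hT
    linarith
  have hTpos : (0 : ℝ) < 2 * (T : ℝ) := by nlinarith
  set c : ℝ := ((T : ℝ) - 1) / (2 * T) with hc
  have hcpos : 0 < c := by positivity
  -- a.e. pointwise bound by the essSup
  obtain ⟨B, hB⟩ := hfbd
  obtain ⟨B', hB'⟩ := hf'bd
  have hbd : ∀ᵐ x ∂π, ‖f' x - f x‖ ≤ essSup (fun x' => ‖f' x' - f x'‖) π := by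
    apply ae_le_essSup
    refine ⟨B' + B, ?_⟩
    rw [Filter.eventually_map]
    filter_upwards [hB, hB'] with x h1 h2
    calc ‖f' x - f x‖ ≤ ‖f' x‖ + ‖f x‖ := norm_sub_le _ _
      _ ≤ B' + B := add_le_add h2 h1
  apply measure_mono_ae
  filter_upwards [huniq, hbd] with x _ hx2 hne
  set k := D (f x)
  set i := D (f' x)
  -- norm of difference of code vectors
  have hsq : ‖y k - y i‖ ^ 2 = 2 * (T : ℝ) / ((T : ℝ) - 1) := by
    have h := @norm_sub_sq_real (EuclideanSpace ℝ (Fin (T - 1))) _ _ (y k) (y i)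
    rw [h, hnorm, hnorm, hinner k i (Ne.symm hne)]
    field_simp
    ring
  have hnormki : ‖y k - y i‖ = Real.sqrt (2 * (T : ℝ) / ((T : ℝ) - 1)) := by
    rw [← hsq, Real.sqrt_sq (norm_nonneg _)]
  have hkey : Real.sqrt c * ‖y k - y i‖ = 1 := by
    rw [hnormki, ← Real.sqrt_mul hcpos.le]
    rw [show c * (2 * (T : ℝ) / ((T : ℝ) - 1)) = 1 by
      rw [hc]; field_simp]
    exact Real.sqrt_one
  -- the infimum bound
  have hinf : (⨅ j : {j : Fin T // j ≠ k}, ⟪f x, y k - y (j : Fin T)⟫) ≤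
      ⟪f x, y k - y i⟫ := by
    exact ciInf_le (Set.Finite.bddBelow (Set.finite_range _)) (⟨i, hne⟩ : {j : Fin T // j ≠ k})
  -- inner product estimates
  have h1 : ⟪f' x, y k - y i⟫ ≤ 0 := by
    rw [inner_sub_right]
    linarith [hD (f' x) k]
  have h2 : ⟪f x, y k - y i⟫ ≤ ⟪f x - f' x, y k - y i⟫ := by
    rw [inner_sub_left]
    linarith
  have h3 : ⟪f x - f' x, y k - y i⟫ ≤ ‖f x - f' x‖ * ‖y k - y i‖ :=
    real_inner_le_norm _ _
  have h4 : ‖f x - f' x‖ = ‖f' x - f x‖ := norm_sub_rev _ _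
  have hM : (⨅ j : {j : Fin T // j ≠ k}, ⟪f x, y k - y (j : Fin T)⟫) ≤
      ‖f' x - f x‖ * ‖y k - y i‖ := by
    rw [← h4]; linarith
  show Real.sqrt c * _ ≤ _
  calc Real.sqrt c * (⨅ j : {j : Fin T // j ≠ k}, ⟪f x, y k - y (j : Fin T)⟫)
      ≤ Real.sqrt c * (‖f' x - f x‖ * ‖y k - y i‖) :=
        mul_le_mul_of_nonneg_left hM (Real.sqrt_nonneg c)
    _ = ‖f' x - f x‖ * (Real.sqrt c * ‖y k - y i‖) := by ring
    _ = ‖f' x - f x‖ := by rw [hkey, mul_one]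
    _ ≤ essSup (fun x' => ‖f' x' - f x'‖) π := hx2
end

section
/- Let Y ⊂ ℝ^{T−1} be a simplex code for T ≥ 2 classes and let φ : ℝ → ℝ be twice differentiable with φ'(t) < 0 and φ''(t) ≥ 0 for all t (strictly decreasing and convex). Let U ⊆ ℝ^Y be an open set of vectors with nonnegative coordinates and let h : U → ℝ^{T−1} be differentiable and satisfy the first-order optimality condition Σ_{j∈Y} p_j φ'(⟨h(p), j⟩) j = 0 for every p ∈ U (so h(p) is a critical point of w ↦ Φ(p, w) = Σ_{j∈Y} φ(⟨w, j⟩) p_j). Then for every p ∈ U and every y ∈ Y, the partial derivative of p ↦ ⟨h(p), y⟩ with respect to the coordinate p_y is nonnegative: ⟨∂h(p)/∂p_y, y⟩ ≥ 0. -/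
open RealInnerProductSpace

/-!
Differentiate the optimality condition `∑ⱼ pⱼ φ'(⟪h p, yⱼ⟫) yⱼ = 0` along the coordinate direction
`eᵢ` and pair the result with `v = ∂h/∂pᵢ`. This gives
`φ'(⟪h p, yᵢ⟫) ⟪v, yᵢ⟫ + ∑ⱼ pⱼ φ''(⟪h p, yⱼ⟫) ⟪v, yⱼ⟫² = 0`. The sum is nonnegative because
`pⱼ ≥ 0` and `φ'' ≥ 0`, so `φ' < 0` forces `⟪v, yᵢ⟫ ≥ 0`.
-/

variable {ι E : Type*} [Fintype ι] [NormedAddCommGroup E] [InnerProductSpace ℝ E]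

/-- With `ψ = φ'` this is the gradient in `w` of the inner risk `∑ⱼ φ(⟪w, yⱼ⟫) pⱼ`. -/
noncomputable def innerRiskGradient (ψ : ℝ → ℝ) (y : ι → E) (p : ι → ℝ) (w : E) : E :=
  ∑ j, (p j * ψ ⟪w, y j⟫) • y j

theorem hasDerivAt_innerRiskGradient_line {ψ ψ' : ℝ → ℝ} {y : ι → E} {h : (ι → ℝ) → E}
    {h' : (ι → ℝ) →L[ℝ] E} {p : ι → ℝ} (hψ : ∀ j, HasDerivAt ψ (ψ' ⟪h p, y j⟫) ⟪h p, y j⟫)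
    (hh : HasFDerivAt h h' p) (d : ι → ℝ) :
    HasDerivAt (fun s : ℝ => innerRiskGradient ψ y (p + s • d) (h (p + s • d)))
      (∑ j, (d j * ψ ⟪h p, y j⟫ + p j * (ψ' ⟪h p, y j⟫ * ⟪h' d, y j⟫)) • y j) 0 := by
  have hline : HasDerivAt (fun s : ℝ => p + s • d) d 0 := by
    simpa using ((hasDerivAt_id (0 : ℝ)).smul_const d).const_add p
  have hh_line : HasDerivAt (fun s : ℝ => h (p + s • d)) (h' d) 0 :=
    hh.comp_hasDerivAt_of_eq 0 hline (by simp)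
  refine HasDerivAt.fun_sum fun j _ => HasDerivAt.smul_const ?_ (y j)
  have hcoord : HasDerivAt (fun s : ℝ => (p + s • d) j) (d j) 0 := by
    simpa using ((hasDerivAt_id (0 : ℝ)).mul_const (d j)).const_add (p j)
  have hinner : HasDerivAt (fun s : ℝ => ⟪h (p + s • d), y j⟫) ⟪h' d, y j⟫ 0 := by
    simpa using hh_line.inner ℝ (hasDerivAt_const 0 (y j))
  have hψ_line := (hψ j).comp_of_eq 0 hinner (by simp)
  simpa [mul_comm (d j)] using hcoord.fun_mul hψ_line

theorem inner_nonneg_of_smul_add_sum_eq_zero {a : ℝ} {w : ι → ℝ} {y : ι → E} {v : E} {i : ι}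
    (ha : a < 0) (hw : ∀ j, 0 ≤ w j) (hsum : a • y i + ∑ j, (w j * ⟪v, y j⟫) • y j = 0) :
    0 ≤ ⟪v, y i⟫ := by
  have hpair : a * ⟪v, y i⟫ + ∑ j, w j * ⟪v, y j⟫ ^ 2 = 0 := by
    simpa [inner_add_right, inner_sum, inner_smul_right, real_inner_comm v, mul_assoc, sq]
      using congrArg (⟪v, ·⟫) hsum
  have hsq : 0 ≤ ∑ j, w j * ⟪v, y j⟫ ^ 2 :=
    Finset.sum_nonneg fun j _ => mul_nonneg (hw j) (sq_nonneg _)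
  nlinarith

theorem inner_risk_minimizer_monotone_general
    (T : ℕ) (y : Fin T → EuclideanSpace ℝ (Fin (T - 1)))
    (φ' φ'' : ℝ → ℝ)
    (hd2 : ∀ t, HasDerivAt φ' (φ'' t) t)
    (hφ' : ∀ t, φ' t < 0) (hφ'' : ∀ t, 0 ≤ φ'' t)
    (U : Set (Fin T → ℝ)) (hU : IsOpen U) (hUpos : ∀ p ∈ U, ∀ j, 0 ≤ p j)
    (h : (Fin T → ℝ) → EuclideanSpace ℝ (Fin (T - 1)))
    (hdiff : ∀ p ∈ U, DifferentiableAt ℝ h p)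
    (hopt : ∀ p ∈ U, ∑ j, (p j * φ' ⟪h p, y j⟫) • y j = 0)
    (p : Fin T → ℝ) (hp : p ∈ U) (i : Fin T) :
    0 ≤ ⟪fderiv ℝ h p (Pi.single i 1), y i⟫ := by
  have hderiv := hasDerivAt_innerRiskGradient_line (y := y) (fun j => hd2 _)
    (hdiff p hp).hasFDerivAt (Pi.single i 1)
  have hline_mem : ∀ᶠ s : ℝ in nhds 0, p + s • Pi.single i 1 ∈ U :=
    (continuous_const.add (continuous_id.smul continuous_const)).continuousAt.preimage_mem_nhds
      (by simpa using hU.mem_nhds hp)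
  have hzero := hderiv.unique <| (hasDerivAt_const (0 : ℝ) (0 : EuclideanSpace ℝ (Fin (T - 1))))
    |>.congr_of_eventuallyEq (hline_mem.mono fun s hs => hopt _ hs)
  refine inner_nonneg_of_smul_add_sum_eq_zero (w := fun j => p j * φ'' ⟪h p, y j⟫)
    (hφ' ⟪h p, y i⟫) (fun j => mul_nonneg (hUpos p hp j) (hφ'' _)) ?_
  rw [← hzero]
  simp [add_smul, Finset.sum_add_distrib, Pi.single_apply, mul_assoc]

/-- Let `y` be a simplex code for `T ≥ 2` classes and `φ : ℝ → ℝ`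
twice differentiable, strictly decreasing (`φ' < 0`) and convex (`φ'' ≥ 0`).  Let
`U ⊆ ℝ^T` be an open set of vectors with nonnegative coordinates and `h : U → ℝ^{T-1}`
differentiable on `U`, satisfying the first-order optimality condition
`∑_j p_j φ'(⟪h p, y j⟫) • y j = 0` on `U` (so `h p` is a critical point of the inner
risk `w ↦ ∑_j φ(⟪w, y j⟫) p_j`).  Then for every `p ∈ U` and every class `i`, the
partial derivative of `p ↦ ⟪h p, y i⟫` in the coordinate `p_i` is nonnegative. -/
theorem inner_risk_minimizer_monotone
    (T : ℕ) (hT : 2 ≤ T) (y : Fin T → EuclideanSpace ℝ (Fin (T - 1)))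
    (hnorm : ∀ i, ‖y i‖ = 1)
    (hinner : ∀ i j, i ≠ j → ⟪y i, y j⟫ = -1 / ((T : ℝ) - 1))
    (φ φ' φ'' : ℝ → ℝ)
    (hd1 : ∀ t, HasDerivAt φ (φ' t) t)
    (hd2 : ∀ t, HasDerivAt φ' (φ'' t) t)
    (hφ' : ∀ t, φ' t < 0) (hφ'' : ∀ t, 0 ≤ φ'' t)
    (U : Set (Fin T → ℝ)) (hU : IsOpen U) (hUpos : ∀ p ∈ U, ∀ j, 0 ≤ p j)
    (h : (Fin T → ℝ) → EuclideanSpace ℝ (Fin (T - 1)))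
    (hdiff : ∀ p ∈ U, DifferentiableAt ℝ h p)
    (hopt : ∀ p ∈ U, ∑ j, (p j * φ' ⟪h p, y j⟫) • y j = 0)
    (p : Fin T → ℝ) (hp : p ∈ U) (i : Fin T) :
    0 ≤ ⟪fderiv ℝ h p (Pi.single i 1), y i⟫ :=
  inner_risk_minimizer_monotone_general T y φ' φ'' hd2 hφ' hφ'' U hU hUpos h hdiff hopt p hp i
end
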